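/- arXiv:2406.03408 — 3 statements merged into one kernel-verified Lean document; each statement's English description precedes it below -/
import Mathlib

section
/- Let μ be a finite n-dimensional measure on ℝ^m and Q(r) the cube of side length 2r centered at 0. Define K(Q(r)) = 1 + Σ_{j=1}^{N} μ(2^j Q(r)) / ℓ(2^j Q(r))^n where N is the minimal positive integer k with μ(2^k Q(r)) > μ(ℝ^m)/2. Then ∫_{{t : |t| > r}} |t|^{-n} dμ(t) is comparable to K(Q(r)) up to additive and multiplicative constants depending only on n, m, and the n-dimensionality constant of μ; more precisely, there exist constants c, C > 0 such that c·(K(Q(r)) − 1) − C ≤ ∫_{|t|>r} |t|^{-n} dμ(t) and ∫_{|t|>r} |t|^{-n} dμ(t) ≤ C·K(Q(r)). -/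
open MeasureTheory Metric Set

/-- The closed axis-parallel cube in `ℝ^m` (sup-norm) with center `x` and side length `ℓ`. -/
noncomputable def cube {m : ℕ} (x : Fin m → ℝ) (ℓ : ℝ) : Set (Fin m → ℝ) :=
  Metric.closedBall x (ℓ / 2)

/-- `μ` is an `n`-dimensional measure with constant `C₀`:
`μ(Q) ≤ C₀ ℓ(Q)^n` for every cube `Q` of positive side length. -/
def IsNDim {m : ℕ} (μ : Measure (Fin m → ℝ)) (n C₀ : ℝ) : Prop :=
  ∀ (x : Fin m → ℝ) (ℓ : ℝ), 0 < ℓ → μ (cube x ℓ) ≤ ENNReal.ofReal (C₀ * ℓ ^ n)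

/-- `N_{Q,R}`: the minimal integer `k` with `2^k ℓ(Q) ≥ ℓ(R)`. -/
noncomputable def NQR (ℓQ ℓR : ℝ) : ℕ := ⌈Real.logb 2 (ℓR / ℓQ)⌉₊

/-- Tolsa's coefficient `K(Q,R) = 1 + ∑_{j=1}^{N_{Q,R}} μ(2^j Q)/ℓ(2^j Q)^n`
for cubes `Q ⊆ R`, where `Q` has center `x` and side `ℓQ`, and `R` has side `ℓR`. -/
noncomputable def Kcoef {m : ℕ} (μ : Measure (Fin m → ℝ)) (n : ℝ)
    (x : Fin m → ℝ) (ℓQ ℓR : ℝ) : ℝ :=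
  1 + ∑ j ∈ Finset.Icc 1 (NQR ℓQ ℓR),
    (μ (cube x ((2 : ℝ) ^ j * ℓQ))).toReal / (((2 : ℝ) ^ j * ℓQ) ^ n)

/-- The test function `φ(y) = 1 + ∫_{|y| < |t|} |t|^{-n} dμ(t)`. -/
noncomputable def phi {m : ℕ} (μ : Measure (Fin m → ℝ)) (n : ℝ) (y : Fin m → ℝ) : ℝ :=
  1 + (∫⁻ t in {t : Fin m → ℝ | ‖y‖ < ‖t‖}, ENNReal.ofReal (‖t‖ ^ (-n)) ∂μ).toReal

/-- A cube of center `x` and side `ℓ` is `(α, β)`-doubling: `μ(αQ) < β μ(Q)`. -/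
def Doubling {m : ℕ} (μ : Measure (Fin m → ℝ)) (α β : ℝ)
    (x : Fin m → ℝ) (ℓ : ℝ) : Prop :=
  μ (cube x (α * ℓ)) < ENNReal.ofReal β * μ (cube x ℓ)


private lemma sum_shift {M : Type*} [AddCommMonoid M] (F : ℕ → M) (k : ℕ) :
    ∑ j ∈ Finset.Icc 1 k, F j = ∑ i ∈ Finset.range k, F (i + 1) := by
  rw [← Finset.Ico_add_one_right_eq_Icc, Finset.sum_Ico_eq_sum_range]
  exact Finset.sum_congr (by norm_num) fun i _ => by rw [Nat.add_comm]

theorem stmt5 {m : ℕ} (n C₀ : ℝ) (hn : 0 < n) (hnm : n ≤ m)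
    (μ : Measure (Fin m → ℝ)) [IsFiniteMeasure μ]
    (hC₀ : 0 < C₀) (hμ : IsNDim μ n C₀) (hpos : 0 < μ Set.univ) :
    ∃ c C : ℝ, 0 < c ∧ 0 < C ∧ ∀ (r : ℝ) (k : ℕ), 0 < r → 0 < k →
      μ (cube (0 : Fin m → ℝ) ((2 : ℝ) ^ k * (2 * r))) > μ Set.univ / 2 →
      (∀ j : ℕ, 0 < j → j < k →
        ¬ (μ (cube (0 : Fin m → ℝ) ((2 : ℝ) ^ j * (2 * r))) > μ Set.univ / 2)) →
      (c * (Kcoef μ n (0 : Fin m → ℝ) (2 * r) ((2 : ℝ) ^ k * (2 * r)) - 1) - C ≤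
        (∫⁻ t in {t : Fin m → ℝ | r < ‖t‖}, ENNReal.ofReal (‖t‖ ^ (-n)) ∂μ).toReal) ∧
      (∫⁻ t in {t : Fin m → ℝ | r < ‖t‖}, ENNReal.ofReal (‖t‖ ^ (-n)) ∂μ).toReal ≤
        C * Kcoef μ n (0 : Fin m → ℝ) (2 * r) ((2 : ℝ) ^ k * (2 * r)) := by
  classical
  have h2n : (1:ℝ) < 2 ^ n :=
    (Real.one_lt_rpow_iff_of_pos (by norm_num)).mpr (Or.inl ⟨one_lt_two, hn⟩)
  have h2p : (0:ℝ) < 2 ^ n := lt_trans one_pos h2n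
  have h4p : (0:ℝ) < 4 ^ n := Real.rpow_pos_of_pos (by norm_num) n
  refine ⟨2 ^ n - 1, 4 ^ n + C₀ * 2 ^ n + C₀, by linarith,
    by nlinarith [mul_pos hC₀ h2p], ?_⟩
  intro r k hr hk hbig _hmin
  have hr2 : 0 < 2 * r := by linarith
  -- measurability of the integrand
  have hfm : Measurable (fun t : Fin m → ℝ => ENNReal.ofReal (‖t‖ ^ (-n))) := by
    have he : (fun t : Fin m → ℝ => ENNReal.ofReal (‖t‖ ^ (-n)))
        = fun t => ENNReal.ofReal ((‖t‖ ^ n)⁻¹) := by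
      funext t; rw [Real.rpow_neg (norm_nonneg t)]
    rw [he]
    exact (((Real.continuous_rpow_const hn.le).comp continuous_norm).measurable.inv).ennreal_ofReal
  -- basic cubes
  set B : ℕ → Set (Fin m → ℝ) := fun j => Metric.closedBall (0 : Fin m → ℝ) ((2:ℝ)^j * r)
    with hBdef
  have hcube : ∀ j : ℕ, cube (0 : Fin m → ℝ) ((2:ℝ)^j * (2*r)) = B j := by
    intro j
    have he : ((2:ℝ)^j * (2*r)) / 2 = (2:ℝ)^j * r := by ring
    unfold cube
    rw [he]
  have hBmeas : ∀ j, MeasurableSet (B j) := fun j => measurableSet_closedBall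
  have hBne : ∀ j, μ (B j) ≠ ⊤ := fun j => measure_ne_top μ _
  have hmem : ∀ (j : ℕ) (t : Fin m → ℝ), t ∈ B j ↔ ‖t‖ ≤ (2:ℝ)^j * r := by
    intro j t; rw [hBdef]; exact mem_closedBall_zero_iff
  have hBsub : ∀ {i j : ℕ}, i ≤ j → B i ⊆ B j := by
    intro i j hij
    refine closedBall_subset_closedBall ?_
    have h1 : (2:ℝ)^i ≤ 2^j := pow_le_pow_right₀ one_le_two hij
    nlinarith
  set a : ℕ → ℝ := fun j => (μ (B j)).toReal with hadef
  have ha0 : ∀ j, 0 ≤ a j := fun j => ENNReal.toReal_nonneg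
  set P : ℕ → ℝ := fun j => ((2:ℝ)^j * r) ^ n with hPdef
  have hPpos : ∀ j, 0 < P j := fun j => Real.rpow_pos_of_pos (by positivity) n
  have hPsucc : ∀ j, P (j+1) = 2 ^ n * P j := by
    intro j
    have h1 : ((2:ℝ)^(j+1) * r) = 2 * ((2:ℝ)^j * r) := by ring
    simp only [hPdef]
    rw [h1, Real.mul_rpow (by norm_num) (by positivity)]
  have hμBE : ∀ j : ℕ, μ (B j) ≤ ENNReal.ofReal (C₀ * P (j+1)) := by
    intro j
    have h2 := hμ 0 ((2:ℝ)^j * (2*r)) (by positivity)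
    rw [hcube j] at h2
    have h3 : (((2:ℝ)^j * (2*r)) : ℝ) ^ n = P (j+1) := by
      simp only [hPdef]; congr 1; ring
    rwa [h3] at h2
  have haP : ∀ j : ℕ, a j ≤ C₀ * P (j+1) := by
    intro j
    calc a j ≤ (ENNReal.ofReal (C₀ * P (j+1))).toReal :=
          ENNReal.toReal_mono ENNReal.ofReal_ne_top (hμBE j)
      _ = C₀ * P (j+1) := ENNReal.toReal_ofReal (mul_pos hC₀ (hPpos _)).le
  rw [hcube k] at hbig
  -- the region S
  set S : Set (Fin m → ℝ) := {t : Fin m → ℝ | r < ‖t‖} with hSdef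
  have hSeq : S = (B 0)ᶜ := by
    ext t
    simp only [hSdef, hBdef, mem_setOf_eq, mem_compl_iff, mem_closedBall_zero_iff,
      pow_zero, one_mul, not_le]
  have hIne : (∫⁻ t in S, ENNReal.ofReal (‖t‖ ^ (-n)) ∂μ) ≠ ⊤ := by
    have hb : (∫⁻ t in S, ENNReal.ofReal (‖t‖ ^ (-n)) ∂μ) ≤ ENNReal.ofReal (r ^ (-n)) * μ S := by
      rw [← setLIntegral_const]
      refine setLIntegral_mono measurable_const fun t ht => ?_
      rw [hSdef] at ht
      exact ENNReal.ofReal_le_ofReal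
        (Real.rpow_le_rpow_of_nonpos hr (le_of_lt ht) (by linarith))
    exact ne_top_of_le_ne_top
      (ENNReal.mul_ne_top ENNReal.ofReal_ne_top (measure_ne_top μ S)) hb
  -- NQR = k
  have hN : NQR (2*r) ((2:ℝ)^k * (2*r)) = k := by
    unfold NQR
    rw [mul_div_assoc, div_self (ne_of_gt hr2), mul_one, ← Real.rpow_natCast 2 k,
      Real.logb_rpow (by norm_num) (by norm_num), Nat.ceil_natCast]
  -- Kcoef sum
  have hK : Kcoef μ n (0 : Fin m → ℝ) (2*r) ((2:ℝ)^k * (2*r)) - 1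
      = ∑ i ∈ Finset.range k, a (i+1) / P (i+2) := by
    unfold Kcoef
    rw [hN, add_sub_cancel_left, sum_shift]
    refine Finset.sum_congr rfl fun i _ => ?_
    rw [hcube (i+1)]
    have hb2 : ((2:ℝ)^(i+1) * (2*r)) = (2:ℝ)^(i+2) * r := by ring
    rw [hb2]
  set Ks := ∑ i ∈ Finset.range k, a (i+1) / P (i+2) with hKsdef
  have hKs0 : 0 ≤ Ks :=
    Finset.sum_nonneg fun i _ => div_nonneg (ha0 _) (hPpos _).le
  -- the annuli
  set A : ℕ → Set (Fin m → ℝ) := fun i => B (i+1) \ B i with hAdef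
  have hAmeas : ∀ i, MeasurableSet (A i) := fun i => (hBmeas _).diff (hBmeas _)
  have hdisj : ∀ {i j : ℕ}, i < j → Disjoint (A i) (A j) := by
    intro i j hij
    refine Set.disjoint_left.mpr fun t hti htj => ?_
    exact htj.2 (hBsub (by omega) hti.1)
  have hpd : (↑(Finset.range k) : Set ℕ).PairwiseDisjoint A := by
    intro i _ j _ hij
    rcases lt_or_gt_of_ne hij with h | h
    · exact hdisj h
    · exact (hdisj h).symm
  -- LOWER BOUND
  have hlow1 : ∑ i ∈ Finset.range k, ENNReal.ofReal ((P (i+1))⁻¹) * μ (A i)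
      ≤ ∫⁻ t in S, ENNReal.ofReal (‖t‖ ^ (-n)) ∂μ := by
    have h1 : ∀ i ∈ Finset.range k, ENNReal.ofReal ((P (i+1))⁻¹) * μ (A i)
        ≤ ∫⁻ t in A i, ENNReal.ofReal (‖t‖ ^ (-n)) ∂μ := by
      intro i _
      rw [← setLIntegral_const]
      refine setLIntegral_mono hfm fun t ht => ?_
      refine ENNReal.ofReal_le_ofReal ?_
      have h2 : (2:ℝ)^i * r < ‖t‖ := not_le.mp fun h => ht.2 ((hmem i t).mpr h)
      have h3 : ‖t‖ ≤ (2:ℝ)^(i+1) * r := (hmem (i+1) t).mp ht.1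
      simp only [hPdef]
      rw [← Real.rpow_neg (by positivity)]
      exact Real.rpow_le_rpow_of_nonpos (lt_trans (by positivity) h2) h3 (by linarith)
    calc ∑ i ∈ Finset.range k, ENNReal.ofReal ((P (i+1))⁻¹) * μ (A i)
        ≤ ∑ i ∈ Finset.range k, ∫⁻ t in A i, ENNReal.ofReal (‖t‖ ^ (-n)) ∂μ :=
          Finset.sum_le_sum h1
      _ = ∫⁻ t in ⋃ i ∈ Finset.range k, A i, ENNReal.ofReal (‖t‖ ^ (-n)) ∂μ :=
          (lintegral_biUnion_finset hpd (fun i _ => hAmeas i) _).symm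
      _ ≤ ∫⁻ t in S, ENNReal.ofReal (‖t‖ ^ (-n)) ∂μ := by
          refine lintegral_mono_set ?_
          rw [hSeq]
          intro t ht
          simp only [mem_iUnion, exists_prop] at ht
          obtain ⟨i, _, hti⟩ := ht
          exact fun h0 => hti.2 (hBsub (Nat.zero_le i) h0)
  have hlow2 : ∑ i ∈ Finset.range k, (P (i+1))⁻¹ * (a (i+1) - a i)
      ≤ (∫⁻ t in S, ENNReal.ofReal (‖t‖ ^ (-n)) ∂μ).toReal := by
    have h1 := ENNReal.toReal_mono hIne hlow1
    rw [ENNReal.toReal_sum (fun i _ =>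
      ENNReal.mul_ne_top ENNReal.ofReal_ne_top (measure_ne_top μ _))] at h1
    refine le_trans (le_of_eq ?_) h1
    refine Finset.sum_congr rfl fun i _ => ?_
    rw [ENNReal.toReal_mul, ENNReal.toReal_ofReal (inv_nonneg.mpr (hPpos _).le)]
    congr 1
    simp only [hAdef]
    rw [measure_diff (hBsub (Nat.le_succ i)) (hBmeas i).nullMeasurableSet (hBne i),
      ENNReal.toReal_sub_of_le (measure_mono (hBsub (Nat.le_succ i))) (hBne _)]
  have key : ∀ i : ℕ, (P (i+1))⁻¹ * (a (i+1) - a i)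
      = (2 ^ n - 1) * (a (i+1) / P (i+2))
        + ((P (i+2))⁻¹ * a (i+1) - (P (i+1))⁻¹ * a i) := by
    intro i
    have h1 : P (i+2) = 2 ^ n * P (i+1) := hPsucc (i+1)
    have h2 := hPpos (i+1)
    rw [h1]
    field_simp
    ring
  have htel : ∑ i ∈ Finset.range k, ((P (i+2))⁻¹ * a (i+1) - (P (i+1))⁻¹ * a i)
      = (P (k+1))⁻¹ * a k - (P 1)⁻¹ * a 0 :=
    Finset.sum_range_sub (fun i => (P (i+1))⁻¹ * a i) k
  have hsum_eq : ∑ i ∈ Finset.range k, (P (i+1))⁻¹ * (a (i+1) - a i)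
      = (2 ^ n - 1) * Ks + ((P (k+1))⁻¹ * a k - (P 1)⁻¹ * a 0) := by
    rw [hKsdef, Finset.mul_sum, ← htel, ← Finset.sum_add_distrib]
    exact Finset.sum_congr rfl fun i _ => key i
  have hg0 : (P 1)⁻¹ * a 0 ≤ C₀ := by
    have h1 : a 0 ≤ C₀ * P 1 := haP 0
    have h2 := hPpos 1
    calc (P 1)⁻¹ * a 0 ≤ (P 1)⁻¹ * (C₀ * P 1) := by
          exact mul_le_mul_of_nonneg_left h1 (inv_nonneg.mpr h2.le)
      _ = C₀ := by field_simp
  have hgk : 0 ≤ (P (k+1))⁻¹ * a k :=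
    mul_nonneg (inv_nonneg.mpr (hPpos _).le) (ha0 _)
  rw [hsum_eq] at hlow2
  -- UPPER BOUND
  have hup1 : (∫⁻ t in S, ENNReal.ofReal (‖t‖ ^ (-n)) ∂μ)
      ≤ (∑ i ∈ Finset.range k, ∫⁻ t in A i, ENNReal.ofReal (‖t‖ ^ (-n)) ∂μ)
        + ∫⁻ t in (B k)ᶜ, ENNReal.ofReal (‖t‖ ^ (-n)) ∂μ := by
    calc (∫⁻ t in S, ENNReal.ofReal (‖t‖ ^ (-n)) ∂μ)
        ≤ ∫⁻ t in (⋃ i ∈ Finset.range k, A i) ∪ (B k)ᶜ,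
            ENNReal.ofReal (‖t‖ ^ (-n)) ∂μ := by
          refine lintegral_mono_set ?_
          rw [hSeq]
          intro t ht
          by_cases htk : t ∈ B k
          · have hex : ∃ j, t ∈ B j := ⟨k, htk⟩
            have h0 : Nat.find hex ≠ 0 := fun h => ht (h ▸ Nat.find_spec hex)
            obtain ⟨i, hi⟩ := Nat.exists_eq_succ_of_ne_zero h0
            have hik : Nat.find hex ≤ k := Nat.find_le htk
            refine Set.mem_union_left _ ?_
            simp only [mem_iUnion, exists_prop]
            refine ⟨i, Finset.mem_range.mpr (by omega), ?_, ?_⟩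
            · have hi' : Nat.find hex = i + 1 := hi
              rw [← hi']; exact Nat.find_spec hex
            · exact Nat.find_min hex (by omega)
          · exact Set.mem_union_right _ htk
      _ ≤ _ := by
          refine le_trans (lintegral_union_le _ _ _) ?_
          refine add_le_add (le_of_eq ?_) le_rfl
          exact lintegral_biUnion_finset hpd (fun i _ => hAmeas i) _
  have hup2 : ∀ i ∈ Finset.range k,
      (∫⁻ t in A i, ENNReal.ofReal (‖t‖ ^ (-n)) ∂μ)
        ≤ ENNReal.ofReal ((4:ℝ) ^ n * (a (i+1) / P (i+2))) := by
    intro i _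
    have h4P : P (i+2) = 4 ^ n * P i := by
      rw [hPsucc (i+1), hPsucc i]
      have h44 : (4:ℝ) ^ n = 2 ^ n * 2 ^ n := by
        rw [show (4:ℝ) = 2*2 by norm_num, Real.mul_rpow (by norm_num) (by norm_num)]
      rw [h44]; ring
    calc (∫⁻ t in A i, ENNReal.ofReal (‖t‖ ^ (-n)) ∂μ)
        ≤ ∫⁻ _ in A i, ENNReal.ofReal ((P i)⁻¹) ∂μ := by
          refine setLIntegral_mono measurable_const fun t ht => ?_
          refine ENNReal.ofReal_le_ofReal ?_
          have h2 : (2:ℝ)^i * r < ‖t‖ := not_le.mp fun h => ht.2 ((hmem i t).mpr h)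
          simp only [hPdef]
          rw [← Real.rpow_neg (by positivity)]
          exact Real.rpow_le_rpow_of_nonpos (by positivity) h2.le (by linarith)
      _ = ENNReal.ofReal ((P i)⁻¹) * μ (A i) := setLIntegral_const _ _
      _ ≤ ENNReal.ofReal ((P i)⁻¹) * μ (B (i+1)) :=
          mul_le_mul_right (measure_mono diff_subset) _
      _ = ENNReal.ofReal ((P i)⁻¹ * a (i+1)) := by
          rw [ENNReal.ofReal_mul (inv_nonneg.mpr (hPpos i).le)]
          congr 1
          exact (ENNReal.ofReal_toReal (hBne _)).symm
      _ ≤ _ := by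
          refine ENNReal.ofReal_le_ofReal (le_of_eq ?_)
          rw [h4P]
          have := hPpos i
          field_simp
  have hup3 : (∫⁻ t in (B k)ᶜ, ENNReal.ofReal (‖t‖ ^ (-n)) ∂μ)
      ≤ ENNReal.ofReal (C₀ * 2 ^ n) := by
    calc (∫⁻ t in (B k)ᶜ, ENNReal.ofReal (‖t‖ ^ (-n)) ∂μ)
        ≤ ∫⁻ _ in (B k)ᶜ, ENNReal.ofReal ((P k)⁻¹) ∂μ := by
          refine setLIntegral_mono measurable_const fun t ht => ?_
          refine ENNReal.ofReal_le_ofReal ?_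
          have h2 : (2:ℝ)^k * r < ‖t‖ := not_le.mp fun h => ht ((hmem k t).mpr h)
          simp only [hPdef]
          rw [← Real.rpow_neg (by positivity)]
          exact Real.rpow_le_rpow_of_nonpos (by positivity) h2.le (by linarith)
      _ = ENNReal.ofReal ((P k)⁻¹) * μ ((B k)ᶜ) := setLIntegral_const _ _
      _ ≤ ENNReal.ofReal ((P k)⁻¹) * μ (B k) := by
          refine mul_le_mul_right ?_ _
          have h1 : μ univ < μ (B k) * 2 :=
            (ENNReal.div_lt_iff (Or.inl (by norm_num)) (Or.inl (by norm_num))).mp hbig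
          rw [measure_compl (hBmeas k) (hBne k), tsub_le_iff_right]
          calc μ univ ≤ μ (B k) * 2 := h1.le
            _ = μ (B k) + μ (B k) := by ring
      _ ≤ ENNReal.ofReal ((P k)⁻¹) * ENNReal.ofReal (C₀ * P (k+1)) :=
          mul_le_mul_right (hμBE k) _
      _ = ENNReal.ofReal ((P k)⁻¹ * (C₀ * P (k+1))) :=
          (ENNReal.ofReal_mul (inv_nonneg.mpr (hPpos k).le)).symm
      _ ≤ ENNReal.ofReal (C₀ * 2 ^ n) := by
          refine ENNReal.ofReal_le_ofReal (le_of_eq ?_)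
          rw [hPsucc k]
          have := hPpos k
          field_simp
  have hup : (∫⁻ t in S, ENNReal.ofReal (‖t‖ ^ (-n)) ∂μ)
      ≤ ENNReal.ofReal ((4:ℝ) ^ n * Ks + C₀ * 2 ^ n) := by
    refine hup1.trans ?_
    rw [ENNReal.ofReal_add (mul_nonneg h4p.le hKs0) (mul_pos hC₀ h2p).le]
    refine add_le_add ?_ hup3
    calc (∑ i ∈ Finset.range k, ∫⁻ t in A i, ENNReal.ofReal (‖t‖ ^ (-n)) ∂μ)
        ≤ ∑ i ∈ Finset.range k, ENNReal.ofReal ((4:ℝ) ^ n * (a (i+1) / P (i+2))) :=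
          Finset.sum_le_sum hup2
      _ = ENNReal.ofReal (∑ i ∈ Finset.range k, (4:ℝ) ^ n * (a (i+1) / P (i+2))) :=
          (ENNReal.ofReal_sum_of_nonneg (fun i _ =>
            mul_nonneg h4p.le (div_nonneg (ha0 _) (hPpos _).le))).symm
      _ = ENNReal.ofReal ((4:ℝ) ^ n * Ks) := by rw [← Finset.mul_sum, hKsdef]
  have hupper : (∫⁻ t in S, ENNReal.ofReal (‖t‖ ^ (-n)) ∂μ).toReal
      ≤ (4:ℝ) ^ n * Ks + C₀ * 2 ^ n :=
    ENNReal.toReal_le_of_le_ofReal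
      (by nlinarith [mul_nonneg h4p.le hKs0, mul_pos hC₀ h2p]) hup
  constructor
  · rw [hK]
    have hC₀2 : 0 < C₀ * 2 ^ n := mul_pos hC₀ h2p
    linarith
  · rw [show Kcoef μ n (0 : Fin m → ℝ) (2*r) ((2:ℝ)^k * (2*r)) = 1 + Ks by linarith [hK]]
    have hC₀2 : 0 < C₀ * 2 ^ n := mul_pos hC₀ h2p
    nlinarith [mul_nonneg (mul_pos hC₀ h2p).le hKs0, mul_nonneg hC₀.le hKs0]
end

section
/- Let μ be a finite n-dimensional measure on ℝ^m and let Q be an (α, β)-doubling cube centered at the origin with α ≥ 5, i.e., μ(αQ) < β·μ(Q). Let φ(y) = 1 + ∫_{|y| < |t|} |t|^{-n} dμ(t) and let ⟨φ⟩_Q = (1/μ(Q)) ∫_Q φ dμ denote the average of φ over Q. Then |⟨φ⟩_Q| ≥ c·K(Q) − C(α, β), where c > 0 and C(α,β) > 0 depend only on n, m, α, β and the constants of μ, and K(Q) = K(Q, 2^k Q) with k minimal such that μ(2^k Q) > μ(ℝ^m)/2. -/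
open MeasureTheory Metric Set
open scoped ENNReal

/-- geometric tail bound in `ℝ≥0∞` -/
lemma aux_geom_sum (q : ℝ≥0∞) (i N : ℕ) :
    ∑ j ∈ Finset.Icc i N, q ^ j ≤ q ^ i * (1 - q)⁻¹ := by
  have hsub : Finset.Icc i N ⊆ (Finset.range (N + 1)).image (i + ·) := by
    intro j hj
    simp only [Finset.mem_Icc] at hj
    simp only [Finset.mem_image, Finset.mem_range]
    exact ⟨j - i, by omega, by omega⟩
  calc ∑ j ∈ Finset.Icc i N, q ^ j
      ≤ ∑ j ∈ (Finset.range (N + 1)).image (i + ·), q ^ j :=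
        Finset.sum_le_sum_of_subset hsub
    _ = ∑ d ∈ Finset.range (N + 1), q ^ (i + d) :=
        Finset.sum_image (by intro a _ b _ h; exact Nat.add_left_cancel h)
    _ = q ^ i * ∑ d ∈ Finset.range (N + 1), q ^ d := by
        rw [Finset.mul_sum]; exact Finset.sum_congr rfl fun d _ => pow_add q i d
    _ ≤ q ^ i * (1 - q)⁻¹ := by
        gcongr
        exact (ENNReal.sum_le_tsum _).trans (le_of_eq (ENNReal.tsum_geometric q))

set_option maxHeartbeats 1000000 in
theorem stmt9 {m : ℕ} (n C₀ α β : ℝ) (hn : 0 < n) (hnm : n ≤ m)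
    (hα : 5 ≤ α) (hβ : α ^ n < β)
    (μ : Measure (Fin m → ℝ)) [IsFiniteMeasure μ]
    (hC₀ : 0 < C₀) (hμ : IsNDim μ n C₀) :
    ∃ c C : ℝ, 0 < c ∧ 0 < C ∧ ∀ (ℓ : ℝ) (k : ℕ), 0 < ℓ →
      Doubling μ α β (0 : Fin m → ℝ) ℓ → 0 < k →
      μ (cube (0 : Fin m → ℝ) ((2 : ℝ) ^ k * ℓ)) > μ Set.univ / 2 →
      (∀ j : ℕ, 0 < j → j < k →
        ¬ (μ (cube (0 : Fin m → ℝ) ((2 : ℝ) ^ j * ℓ)) > μ Set.univ / 2)) →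
      c * Kcoef μ n (0 : Fin m → ℝ) ℓ ((2 : ℝ) ^ k * ℓ) - C ≤
        |(∫ z in cube (0 : Fin m → ℝ) ℓ, phi μ n z ∂μ) /
          (μ (cube (0 : Fin m → ℝ) ℓ)).toReal| := by
  classical
  have hp1 : (1 : ℝ) < (2 : ℝ) ^ n :=
    (Real.one_lt_rpow_iff_of_pos two_pos).mpr (Or.inl ⟨one_lt_two, hn⟩)
  set p : ℝ := (2 : ℝ) ^ n with hp_def
  have hp0 : 0 < p := lt_trans one_pos hp1
  set q : ℝ≥0∞ := ENNReal.ofReal p⁻¹ with hq_def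
  have hq1 : q < 1 := by
    rw [hq_def, ENNReal.ofReal_lt_one]
    exact inv_lt_one_of_one_lt₀ hp1
  set geo : ℝ≥0∞ := (1 - q)⁻¹ with hgeo_def
  have hgeo_ne_top : geo ≠ ⊤ := by
    rw [hgeo_def, Ne, ENNReal.inv_eq_top, tsub_eq_zero_iff_le]
    exact fun h => absurd hq1 (not_lt.mpr h)
  set Sg : ℝ := geo.toReal with hSg_def
  have hSg : 0 ≤ Sg := ENNReal.toReal_nonneg
  refine ⟨(1 + Sg * C₀ + Sg)⁻¹, 1, inv_pos.mpr (by positivity), one_pos, ?_⟩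
  intro ℓ k hℓ hdbl _hk _hbig _hsmall
  set f : (Fin m → ℝ) → ℝ≥0∞ := fun t => ENNReal.ofReal (‖t‖ ^ (-n)) with hf_def
  have hfmeas : Measurable f := by fun_prop
  set Q : Set (Fin m → ℝ) := cube 0 ℓ with hQ_def
  have hQmeas : MeasurableSet Q := measurableSet_closedBall
  set Tinf : ℝ≥0∞ := ∫⁻ t in {t : Fin m → ℝ | ℓ / 2 < ‖t‖}, f t ∂μ with hT_def
  set T : ℝ := Tinf.toReal with hTr_def
  have hTnn : 0 ≤ T := ENNReal.toReal_nonneg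
  -- rpow basics
  have key_anti : ∀ x y : ℝ, 0 < x → x ≤ y → y ^ (-n) ≤ x ^ (-n) := by
    intro x y hx hxy
    rw [Real.rpow_neg hx.le, Real.rpow_neg (hx.trans_le hxy).le]
    exact inv_anti₀ (Real.rpow_pos_of_pos hx n) (Real.rpow_le_rpow hx.le hxy hn.le)
  have hside : ∀ j : ℕ, ((2 : ℝ) ^ j * ℓ) ^ n = p ^ j * ℓ ^ n := by
    intro j
    rw [Real.mul_rpow (by positivity) hℓ.le]
    congr 1
    rw [← Real.rpow_natCast (2 : ℝ) j, ← Real.rpow_natCast p j, hp_def,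
      ← Real.rpow_mul (by norm_num), ← Real.rpow_mul (by norm_num), mul_comm]
  have hℓn : 0 < ℓ ^ n := Real.rpow_pos_of_pos hℓ n
  -- Tinf finite
  have hTtop : Tinf ≠ ⊤ := by
    have hb : Tinf ≤ ENNReal.ofReal ((ℓ / 2) ^ (-n)) * μ {t : Fin m → ℝ | ℓ / 2 < ‖t‖} := by
      rw [hT_def]
      calc ∫⁻ t in {t : Fin m → ℝ | ℓ / 2 < ‖t‖}, f t ∂μ
          ≤ ∫⁻ _ in {t : Fin m → ℝ | ℓ / 2 < ‖t‖}, ENNReal.ofReal ((ℓ / 2) ^ (-n)) ∂μ :=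
            setLIntegral_mono measurable_const
              (fun t ht => ENNReal.ofReal_le_ofReal (key_anti _ _ (by linarith) (le_of_lt ht)))
        _ = _ := setLIntegral_const _ _
    exact ne_top_of_le_ne_top
      (ENNReal.mul_ne_top ENNReal.ofReal_ne_top (measure_ne_top μ _)) hb
  -- μ Q positive
  have hμQ : μ Q ≠ 0 := by
    intro h
    unfold Doubling at hdbl
    rw [← hQ_def, h, mul_zero] at hdbl
    simp at hdbl
  have hd : 0 < (μ Q).toReal := ENNReal.toReal_pos hμQ (measure_ne_top μ Q)
  -- the master sum bound
  have hsum : ∀ N : ℕ, ∑ j ∈ Finset.Icc 1 N,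
      ENNReal.ofReal ((p ^ j * ℓ ^ n)⁻¹) * μ (cube (0 : Fin m → ℝ) ((2 : ℝ) ^ j * ℓ)) ≤
      geo * (ENNReal.ofReal C₀ + Tinf) := by
    intro N
    set A : ℕ → Set (Fin m → ℝ) := fun i =>
      cube 0 ((2 : ℝ) ^ i * ℓ) \ cube 0 ((2 : ℝ) ^ (i - 1) * ℓ) with hA_def
    have hAmeas : ∀ i, MeasurableSet (A i) :=
      fun i => measurableSet_closedBall.diff measurableSet_closedBall
    have hcube_mono : ∀ a b : ℝ, a ≤ b → cube (0 : Fin m → ℝ) a ⊆ cube 0 b :=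
      fun a b hab => closedBall_subset_closedBall (by linarith)
    -- pointwise facts about A i for i ≥ 1
    have hAnorm : ∀ i : ℕ, 1 ≤ i → ∀ t ∈ A i,
        (2 : ℝ) ^ (i - 1) * ℓ / 2 < ‖t‖ ∧ ‖t‖ ≤ (2 : ℝ) ^ i * ℓ / 2 := by
      intro i _ t ht
      obtain ⟨ht1, ht2⟩ := ht
      rw [cube, mem_closedBall_zero_iff] at ht1
      constructor
      · by_contra hc
        push_neg at hc
        exact ht2 (mem_closedBall_zero_iff.mpr hc)
      · exact ht1
    -- covering
    have hcover : ∀ j : ℕ, μ (cube (0 : Fin m → ℝ) ((2 : ℝ) ^ j * ℓ)) ≤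
        μ Q + ∑ i ∈ Finset.Icc 1 j, μ (A i) := by
      intro j
      have hsubset : cube (0 : Fin m → ℝ) ((2 : ℝ) ^ j * ℓ) ⊆ Q ∪ ⋃ i ∈ Finset.Icc 1 j, A i := by
        intro t ht
        by_cases htQ : t ∈ Q
        · exact Or.inl htQ
        · refine Or.inr ?_
          have hex : ∃ i, t ∈ cube (0 : Fin m → ℝ) ((2 : ℝ) ^ i * ℓ) := ⟨j, ht⟩
          have hi : t ∈ cube (0 : Fin m → ℝ) ((2 : ℝ) ^ (Nat.find hex) * ℓ) := Nat.find_spec hex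
          have hij : Nat.find hex ≤ j := Nat.find_le ht
          have hi0 : Nat.find hex ≠ 0 := by
            intro hzero
            apply htQ
            rw [hzero] at hi
            simpa [hQ_def] using hi
          have hmin : t ∉ cube (0 : Fin m → ℝ) ((2 : ℝ) ^ (Nat.find hex - 1) * ℓ) :=
            Nat.find_min hex (by omega)
          exact Set.mem_iUnion₂.mpr ⟨Nat.find hex, by rw [Finset.mem_Icc]; omega, ⟨hi, hmin⟩⟩
      calc μ (cube (0 : Fin m → ℝ) ((2 : ℝ) ^ j * ℓ))
          ≤ μ (Q ∪ ⋃ i ∈ Finset.Icc 1 j, A i) := measure_mono hsubset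
        _ ≤ μ Q + μ (⋃ i ∈ Finset.Icc 1 j, A i) := measure_union_le _ _
        _ ≤ μ Q + ∑ i ∈ Finset.Icc 1 j, μ (A i) :=
            add_le_add le_rfl (measure_biUnion_finset_le _ _)
    -- relating coefficients to powers of q
    have hcq : ∀ j : ℕ, ENNReal.ofReal ((p ^ j * ℓ ^ n)⁻¹) =
        ENNReal.ofReal ((ℓ ^ n)⁻¹) * q ^ j := by
      intro j
      have h1 : (p ^ j * ℓ ^ n)⁻¹ = (ℓ ^ n)⁻¹ * (p⁻¹) ^ j := by
        rw [mul_inv, inv_pow]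
        ring
      rw [h1, ENNReal.ofReal_mul (by positivity), hq_def, ENNReal.ofReal_pow (by positivity)]
    -- the per-annulus bound
    have hterm : ∀ i : ℕ, 1 ≤ i →
        ENNReal.ofReal ((p ^ i * ℓ ^ n)⁻¹) * μ (A i) ≤ ∫⁻ t in A i, f t ∂μ := by
      intro i hi
      have hlow : ∀ t ∈ A i, ENNReal.ofReal ((p ^ i * ℓ ^ n)⁻¹) ≤ f t := by
        intro t ht
        obtain ⟨hlo, hhi⟩ := hAnorm i hi t ht
        have h0t : 0 < ‖t‖ := lt_of_le_of_lt (by positivity) hlo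
        have hbig : ‖t‖ ≤ (2 : ℝ) ^ i * ℓ := by
          have h2 : (0:ℝ) ≤ (2 : ℝ) ^ i * ℓ := by positivity
          linarith
        rw [hf_def]
        apply ENNReal.ofReal_le_ofReal
        calc (p ^ i * ℓ ^ n)⁻¹ = ((2 : ℝ) ^ i * ℓ) ^ (-n) := by
              rw [Real.rpow_neg (by positivity), hside i]
          _ ≤ ‖t‖ ^ (-n) := key_anti _ _ h0t hbig
      calc ENNReal.ofReal ((p ^ i * ℓ ^ n)⁻¹) * μ (A i)
          = ∫⁻ _ in A i, ENNReal.ofReal ((p ^ i * ℓ ^ n)⁻¹) ∂μ := (setLIntegral_const _ _).symm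
        _ ≤ ∫⁻ t in A i, f t ∂μ := setLIntegral_mono hfmeas hlow
    -- disjointness and total annuli bound
    have hD : ∀ a b : ℕ, 1 ≤ a → a < b → Disjoint (A a) (A b) := by
      intro a b _ hab
      rw [Set.disjoint_left]
      intro t hta htb
      apply htb.2
      apply hcube_mono ((2:ℝ) ^ a * ℓ) ((2:ℝ) ^ (b-1) * ℓ) ?_ hta.1
      have h2 : (2:ℝ) ^ a ≤ (2:ℝ) ^ (b-1) := by
        apply pow_le_pow_right₀ one_le_two (by omega)
      nlinarith
    have hdisj : (↑(Finset.Icc 1 N) : Set ℕ).PairwiseDisjoint A := by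
      intro i hi i' hi' hne
      simp only [Finset.coe_Icc, Set.mem_Icc] at hi hi'
      rcases lt_or_gt_of_ne hne with h | h
      · exact hD i i' hi.1 h
      · exact (hD i' i hi'.1 h).symm
    have hsumA : ∑ i ∈ Finset.Icc 1 N, ∫⁻ t in A i, f t ∂μ ≤ Tinf := by
      rw [← lintegral_biUnion_finset hdisj (fun i _ => hAmeas i) f]
      apply lintegral_mono_set
      intro t ht
      simp only [Set.mem_iUnion, exists_prop] at ht
      obtain ⟨i, hiI, hti⟩ := ht
      rw [Finset.mem_Icc] at hiI
      obtain ⟨hlo, _⟩ := hAnorm i hiI.1 t hti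
      have h1 : (1:ℝ) ≤ (2:ℝ) ^ (i-1) := one_le_pow₀ one_le_two
      show ℓ / 2 < ‖t‖
      nlinarith
    -- part 1: the Q-part
    have hpart1 : ∑ j ∈ Finset.Icc 1 N, ENNReal.ofReal ((p ^ j * ℓ ^ n)⁻¹) * μ Q ≤
        geo * ENNReal.ofReal C₀ := by
      have hperj : ∀ j : ℕ, ENNReal.ofReal ((p ^ j * ℓ ^ n)⁻¹) * μ Q ≤ q ^ j * ENNReal.ofReal C₀ := by
        intro j
        calc ENNReal.ofReal ((p ^ j * ℓ ^ n)⁻¹) * μ Q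
            ≤ ENNReal.ofReal ((p ^ j * ℓ ^ n)⁻¹) * ENNReal.ofReal (C₀ * ℓ ^ n) := by
              gcongr
              exact hμ 0 ℓ hℓ
          _ = q ^ j * ENNReal.ofReal C₀ := by
              rw [← ENNReal.ofReal_mul (by positivity)]
              have he : (p ^ j * ℓ ^ n)⁻¹ * (C₀ * ℓ ^ n) = (p⁻¹) ^ j * C₀ := by
                rw [mul_inv, inv_pow, mul_mul_mul_comm, inv_mul_cancel₀ hℓn.ne', mul_one]
              rw [he, ENNReal.ofReal_mul (by positivity),
                ENNReal.ofReal_pow (by positivity), ← hq_def]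
      calc ∑ j ∈ Finset.Icc 1 N, ENNReal.ofReal ((p ^ j * ℓ ^ n)⁻¹) * μ Q
          ≤ ∑ j ∈ Finset.Icc 1 N, q ^ j * ENNReal.ofReal C₀ :=
            Finset.sum_le_sum fun j _ => hperj j
        _ = (∑ j ∈ Finset.Icc 1 N, q ^ j) * ENNReal.ofReal C₀ := by rw [Finset.sum_mul]
        _ ≤ (q ^ 1 * geo) * ENNReal.ofReal C₀ := by
            gcongr
            exact (aux_geom_sum q 1 N).trans (le_of_eq (by rw [hgeo_def]))
        _ ≤ geo * ENNReal.ofReal C₀ := by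
            gcongr
            calc q ^ 1 * geo ≤ 1 * geo := by gcongr; exact (pow_one q).le.trans hq1.le
              _ = geo := one_mul geo
    -- part 2: the annuli part
    have hpart2 : ∑ j ∈ Finset.Icc 1 N,
        ENNReal.ofReal ((p ^ j * ℓ ^ n)⁻¹) * ∑ i ∈ Finset.Icc 1 j, μ (A i) ≤ geo * Tinf := by
      have hswap : ∑ j ∈ Finset.Icc 1 N,
          ENNReal.ofReal ((p ^ j * ℓ ^ n)⁻¹) * ∑ i ∈ Finset.Icc 1 j, μ (A i) =
          ∑ i ∈ Finset.Icc 1 N, (∑ j ∈ Finset.Icc i N, ENNReal.ofReal ((p ^ j * ℓ ^ n)⁻¹)) * μ (A i) := by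
        calc ∑ j ∈ Finset.Icc 1 N, ENNReal.ofReal ((p ^ j * ℓ ^ n)⁻¹) * ∑ i ∈ Finset.Icc 1 j, μ (A i)
            = ∑ j ∈ Finset.Icc 1 N, ∑ i ∈ Finset.Icc 1 j,
                ENNReal.ofReal ((p ^ j * ℓ ^ n)⁻¹) * μ (A i) := by
              apply Finset.sum_congr rfl
              intro j _
              rw [Finset.mul_sum]
          _ = ∑ i ∈ Finset.Icc 1 N, ∑ j ∈ Finset.Icc i N,
                ENNReal.ofReal ((p ^ j * ℓ ^ n)⁻¹) * μ (A i) := by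
              apply Finset.sum_comm'
              intro j i
              simp only [Finset.mem_Icc]
              omega
          _ = _ := by
              apply Finset.sum_congr rfl
              intro i _
              rw [Finset.sum_mul]
      rw [hswap]
      have hinner : ∀ i : ℕ, 1 ≤ i →
          (∑ j ∈ Finset.Icc i N, ENNReal.ofReal ((p ^ j * ℓ ^ n)⁻¹)) * μ (A i) ≤
          geo * (ENNReal.ofReal ((p ^ i * ℓ ^ n)⁻¹) * μ (A i)) := by
        intro i hi
        have hs : ∑ j ∈ Finset.Icc i N, ENNReal.ofReal ((p ^ j * ℓ ^ n)⁻¹) ≤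
            geo * ENNReal.ofReal ((p ^ i * ℓ ^ n)⁻¹) := by
          calc ∑ j ∈ Finset.Icc i N, ENNReal.ofReal ((p ^ j * ℓ ^ n)⁻¹)
              = ∑ j ∈ Finset.Icc i N, ENNReal.ofReal ((ℓ ^ n)⁻¹) * q ^ j := by
                exact Finset.sum_congr rfl fun j _ => hcq j
            _ = ENNReal.ofReal ((ℓ ^ n)⁻¹) * ∑ j ∈ Finset.Icc i N, q ^ j := by
                rw [Finset.mul_sum]
            _ ≤ ENNReal.ofReal ((ℓ ^ n)⁻¹) * (q ^ i * geo) := by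
                gcongr
                exact (aux_geom_sum q i N).trans (le_of_eq (by rw [hgeo_def]))
            _ = geo * (ENNReal.ofReal ((ℓ ^ n)⁻¹) * q ^ i) := by ring
            _ = geo * ENNReal.ofReal ((p ^ i * ℓ ^ n)⁻¹) := by rw [hcq i]
        calc (∑ j ∈ Finset.Icc i N, ENNReal.ofReal ((p ^ j * ℓ ^ n)⁻¹)) * μ (A i)
            ≤ (geo * ENNReal.ofReal ((p ^ i * ℓ ^ n)⁻¹)) * μ (A i) := by gcongr
          _ = geo * (ENNReal.ofReal ((p ^ i * ℓ ^ n)⁻¹) * μ (A i)) := by ring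
      calc ∑ i ∈ Finset.Icc 1 N, (∑ j ∈ Finset.Icc i N, ENNReal.ofReal ((p ^ j * ℓ ^ n)⁻¹)) * μ (A i)
          ≤ ∑ i ∈ Finset.Icc 1 N, geo * (ENNReal.ofReal ((p ^ i * ℓ ^ n)⁻¹) * μ (A i)) := by
            apply Finset.sum_le_sum
            intro i hi
            rw [Finset.mem_Icc] at hi
            exact hinner i hi.1
        _ = geo * ∑ i ∈ Finset.Icc 1 N, ENNReal.ofReal ((p ^ i * ℓ ^ n)⁻¹) * μ (A i) := by
            rw [Finset.mul_sum]
        _ ≤ geo * ∑ i ∈ Finset.Icc 1 N, ∫⁻ t in A i, f t ∂μ := by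
            gcongr with i hi
            rw [Finset.mem_Icc] at hi
            exact hterm i hi.1
        _ ≤ geo * Tinf := by gcongr
    -- assemble
    calc ∑ j ∈ Finset.Icc 1 N,
        ENNReal.ofReal ((p ^ j * ℓ ^ n)⁻¹) * μ (cube (0 : Fin m → ℝ) ((2 : ℝ) ^ j * ℓ))
        ≤ ∑ j ∈ Finset.Icc 1 N, (ENNReal.ofReal ((p ^ j * ℓ ^ n)⁻¹) * μ Q +
            ENNReal.ofReal ((p ^ j * ℓ ^ n)⁻¹) * ∑ i ∈ Finset.Icc 1 j, μ (A i)) := by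
          apply Finset.sum_le_sum
          intro j _
          rw [← mul_add]
          gcongr
          exact hcover j
      _ = (∑ j ∈ Finset.Icc 1 N, ENNReal.ofReal ((p ^ j * ℓ ^ n)⁻¹) * μ Q) +
          ∑ j ∈ Finset.Icc 1 N, ENNReal.ofReal ((p ^ j * ℓ ^ n)⁻¹) * ∑ i ∈ Finset.Icc 1 j, μ (A i) :=
          Finset.sum_add_distrib
      _ ≤ geo * ENNReal.ofReal C₀ + geo * Tinf := add_le_add hpart1 hpart2
      _ = geo * (ENNReal.ofReal C₀ + Tinf) := (mul_add _ _ _).symm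
  -- Kcoef bound
  have hK : Kcoef μ n (0 : Fin m → ℝ) ℓ ((2 : ℝ) ^ k * ℓ) ≤ 1 + Sg * (C₀ + T) := by
    rw [Kcoef]
    set M : ℕ := NQR ℓ ((2 : ℝ) ^ k * ℓ) with hM_def
    have hne : ∀ j ∈ Finset.Icc 1 M,
        ENNReal.ofReal ((p ^ j * ℓ ^ n)⁻¹) * μ (cube (0 : Fin m → ℝ) ((2 : ℝ) ^ j * ℓ)) ≠ ⊤ :=
      fun j _ => ENNReal.mul_ne_top ENNReal.ofReal_ne_top (measure_ne_top μ _)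
    have hRne : geo * (ENNReal.ofReal C₀ + Tinf) ≠ ⊤ :=
      ENNReal.mul_ne_top hgeo_ne_top (ENNReal.add_ne_top.mpr ⟨ENNReal.ofReal_ne_top, hTtop⟩)
    have h1 : ∑ j ∈ Finset.Icc 1 M,
        (μ (cube (0 : Fin m → ℝ) ((2 : ℝ) ^ j * ℓ))).toReal / (((2 : ℝ) ^ j * ℓ) ^ n) =
        (∑ j ∈ Finset.Icc 1 M,
          ENNReal.ofReal ((p ^ j * ℓ ^ n)⁻¹) * μ (cube (0 : Fin m → ℝ) ((2 : ℝ) ^ j * ℓ))).toReal := by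
      rw [ENNReal.toReal_sum hne]
      apply Finset.sum_congr rfl
      intro j _
      rw [hside j, div_eq_mul_inv, mul_comm, ENNReal.toReal_mul,
        ENNReal.toReal_ofReal (by positivity)]
    have h2 : (geo * (ENNReal.ofReal C₀ + Tinf)).toReal = Sg * (C₀ + T) := by
      rw [ENNReal.toReal_mul, ENNReal.toReal_add ENNReal.ofReal_ne_top hTtop,
        ENNReal.toReal_ofReal hC₀.le]
    have h3 := ENNReal.toReal_mono hRne (hsum M)
    rw [h1]
    rw [h2] at h3
    linarith
  -- μ {0} = 0
  have h0 : μ ({0} : Set (Fin m → ℝ)) = 0 := by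
    by_contra h
    have hpos : 0 < (μ ({0} : Set (Fin m → ℝ))).toReal :=
      ENNReal.toReal_pos h (measure_ne_top _ _)
    set ε : ℝ := (μ ({0} : Set (Fin m → ℝ))).toReal with hε_def
    set s : ℝ := (ε / (2 * C₀)) ^ (n⁻¹) with hs_def
    have hs0 : 0 < s := Real.rpow_pos_of_pos (by positivity) _
    have hsn : s ^ n = ε / (2 * C₀) := Real.rpow_inv_rpow (by positivity) (ne_of_gt hn)
    have hsub : ({0} : Set (Fin m → ℝ)) ⊆ cube 0 s := by
      intro z hz
      rw [Set.mem_singleton_iff] at hz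
      subst hz
      rw [cube, mem_closedBall_zero_iff, norm_zero]
      positivity
    have hb : μ ({0} : Set (Fin m → ℝ)) ≤ ENNReal.ofReal (C₀ * s ^ n) :=
      le_trans (measure_mono hsub) (hμ 0 s hs0)
    have hb2 : ε ≤ C₀ * s ^ n := ENNReal.toReal_le_of_le_ofReal (by positivity) hb
    rw [hsn] at hb2
    have : C₀ * (ε / (2 * C₀)) = ε / 2 := by field_simp
    rw [this] at hb2
    linarith
  -- the function G
  set G : ℝ → ℝ≥0∞ := fun r => ∫⁻ t in {t : Fin m → ℝ | r < ‖t‖}, f t ∂μ with hG_def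
  have hGanti : Antitone G := fun r s hrs =>
    lintegral_mono_set (fun t ht => lt_of_le_of_lt hrs ht)
  have hGmeas : Measurable G := hGanti.measurable
  have hphiG : ∀ z, phi μ n z = 1 + (G ‖z‖).toReal := fun z => rfl
  have hGfin : ∀ z : Fin m → ℝ, z ≠ 0 → G ‖z‖ ≠ ⊤ := by
    intro z hz
    have h0z : 0 < ‖z‖ := norm_pos_iff.mpr hz
    have hb : G ‖z‖ ≤ ENNReal.ofReal (‖z‖ ^ (-n)) * μ {t : Fin m → ℝ | ‖z‖ < ‖t‖} := by
      calc G ‖z‖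
          ≤ ∫⁻ _ in {t : Fin m → ℝ | ‖z‖ < ‖t‖}, ENNReal.ofReal (‖z‖ ^ (-n)) ∂μ :=
            setLIntegral_mono measurable_const
              (fun t ht => ENNReal.ofReal_le_ofReal (key_anti _ _ h0z (le_of_lt ht)))
        _ = _ := setLIntegral_const _ _
    exact ne_top_of_le_ne_top
      (ENNReal.mul_ne_top ENNReal.ofReal_ne_top (measure_ne_top μ _)) hb
  -- Tonelli: the double integral is finite
  have hJ : ∫⁻ z in Q, G ‖z‖ ∂μ ≠ ⊤ := by
    set F : (Fin m → ℝ) × (Fin m → ℝ) → ℝ≥0∞ := fun pz =>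
      {p : (Fin m → ℝ) × (Fin m → ℝ) | ‖p.1‖ < ‖p.2‖}.indicator (fun p => f p.2) pz with hF_def
    have hFmeas : Measurable F := by
      apply Measurable.indicator
      · fun_prop
      · exact measurableSet_lt (by fun_prop) (by fun_prop)
    have hGF : ∀ z, G ‖z‖ = ∫⁻ t, F (z, t) ∂μ := by
      intro z
      rw [hG_def]
      simp only
      rw [← lintegral_indicator (measurableSet_lt measurable_const measurable_norm) f]
      apply lintegral_congr
      intro t
      by_cases h : ‖z‖ < ‖t‖ <;>
        simp [hF_def, Set.indicator_apply, Set.mem_setOf_eq, h]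
    set B : ℝ≥0∞ := ENNReal.ofReal (C₀ * p) + ENNReal.ofReal ((ℓ / 2) ^ (-n)) * μ Q with hB_def
    have hBtop : B ≠ ⊤ :=
      ENNReal.add_ne_top.mpr ⟨ENNReal.ofReal_ne_top,
        ENNReal.mul_ne_top ENNReal.ofReal_ne_top (measure_ne_top μ _)⟩
    have hinner : ∀ t : Fin m → ℝ, ∫⁻ z in Q, F (z, t) ∂μ ≤ B := by
      intro t
      by_cases hcase : ℓ / 2 < ‖t‖
      · have hFle : ∀ z : Fin m → ℝ, F (z, t) ≤ ENNReal.ofReal ((ℓ / 2) ^ (-n)) := by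
          intro z
          rw [hF_def]
          simp only
          by_cases h : ‖z‖ < ‖t‖
          · refine le_trans (le_of_eq (Set.indicator_of_mem
              (show (z, t) ∈ {p : (Fin m → ℝ) × (Fin m → ℝ) | ‖p.1‖ < ‖p.2‖} from h) _)) ?_
            exact ENNReal.ofReal_le_ofReal (key_anti _ _ (by linarith) hcase.le)
          · exact le_trans (le_of_eq (Set.indicator_of_notMem
              (show ¬((z, t) ∈ {p : (Fin m → ℝ) × (Fin m → ℝ) | ‖p.1‖ < ‖p.2‖}) from h) _))
              (zero_le)
        calc ∫⁻ z in Q, F (z, t) ∂μ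
            ≤ ∫⁻ _ in Q, ENNReal.ofReal ((ℓ / 2) ^ (-n)) ∂μ :=
              setLIntegral_mono measurable_const (fun z _ => hFle z)
          _ = ENNReal.ofReal ((ℓ / 2) ^ (-n)) * μ Q := setLIntegral_const _ _
          _ ≤ B := le_add_self
      · push_neg at hcase
        by_cases ht0 : ‖t‖ = 0
        · have hz : ∀ z : Fin m → ℝ, F (z, t) = 0 := by
            intro z
            have hmem : ¬((z, t) ∈ {p : (Fin m → ℝ) × (Fin m → ℝ) | ‖p.1‖ < ‖p.2‖}) := by
              rw [Set.mem_setOf_eq]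
              show ¬ ‖z‖ < ‖t‖
              rw [ht0]
              exact not_lt.mpr (norm_nonneg z)
            exact Set.indicator_of_notMem hmem _
          calc ∫⁻ z in Q, F (z, t) ∂μ ≤ ∫⁻ _ in Q, 0 ∂μ :=
                setLIntegral_mono measurable_const (fun z _ => le_of_eq (hz z))
            _ = 0 := by simp
            _ ≤ B := zero_le
        · have h0t : 0 < ‖t‖ := (norm_nonneg t).lt_of_ne (Ne.symm ht0)
          have hFeq : ∀ z : Fin m → ℝ,
              F (z, t) = {z : Fin m → ℝ | ‖z‖ < ‖t‖}.indicator (fun _ => f t) z := by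
            intro z
            by_cases h : ‖z‖ < ‖t‖ <;>
              simp [hF_def, Set.indicator_apply, Set.mem_setOf_eq, h]
          calc ∫⁻ z in Q, F (z, t) ∂μ
              ≤ ∫⁻ z, {z : Fin m → ℝ | ‖z‖ < ‖t‖}.indicator (fun _ => f t) z ∂μ := by
                rw [setLIntegral_congr_fun hQmeas (fun z _ => hFeq z)]
                exact setLIntegral_le_lintegral _ _
            _ = f t * μ {z : Fin m → ℝ | ‖z‖ < ‖t‖} := by
                rw [lintegral_indicator (measurableSet_lt measurable_norm measurable_const)]
                exact setLIntegral_const _ _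
            _ ≤ f t * μ (cube 0 (2 * ‖t‖)) := by
                gcongr
                intro z hz
                rw [cube, mem_closedBall_zero_iff]
                rw [Set.mem_setOf_eq] at hz
                linarith
            _ ≤ f t * ENNReal.ofReal (C₀ * (2 * ‖t‖) ^ n) := by
                gcongr
                exact hμ 0 (2 * ‖t‖) (by positivity)
            _ = ENNReal.ofReal (‖t‖ ^ (-n) * (C₀ * (2 * ‖t‖) ^ n)) := by
                rw [hf_def]
                simp only
                rw [← ENNReal.ofReal_mul (by positivity)]
            _ ≤ B := by
                have heq : ‖t‖ ^ (-n) * (C₀ * (2 * ‖t‖) ^ n) = C₀ * p := by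
                  rw [Real.mul_rpow (by norm_num) (norm_nonneg t),
                    Real.rpow_neg (norm_nonneg t), hp_def]
                  have hne : ‖t‖ ^ n ≠ 0 := ne_of_gt (Real.rpow_pos_of_pos h0t n)
                  field_simp
                rw [heq]
                exact self_le_add_right _ _
    apply ne_top_of_le_ne_top (ENNReal.mul_ne_top hBtop (measure_ne_top μ Set.univ))
    calc ∫⁻ z in Q, G ‖z‖ ∂μ = ∫⁻ z in Q, ∫⁻ t, F (z, t) ∂μ ∂μ :=
          lintegral_congr fun z => hGF z
      _ = ∫⁻ t, ∫⁻ z in Q, F (z, t) ∂μ ∂μ :=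
          lintegral_lintegral_swap hFmeas.aemeasurable
      _ ≤ ∫⁻ _, B ∂μ := lintegral_mono fun t => hinner t
      _ = B * μ Set.univ := lintegral_const B
  -- integrability of phi on Q
  have hint : Integrable (phi μ n) (μ.restrict Q) := by
    have hphimeas : Measurable (phi μ n) := by
      have heq : phi μ n = fun z => 1 + (G ‖z‖).toReal := funext fun z => hphiG z
      rw [heq]
      exact measurable_const.add ((hGmeas.comp measurable_norm).ennreal_toReal)
    refine ⟨hphimeas.aestronglyMeasurable, ?_⟩
    rw [hasFiniteIntegral_iff_ofReal (Filter.Eventually.of_forall fun z => by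
      rw [hphiG z]; positivity)]
    calc ∫⁻ z in Q, ENNReal.ofReal (phi μ n z) ∂μ
        ≤ ∫⁻ z in Q, (1 + G ‖z‖) ∂μ := by
          apply lintegral_mono
          intro z
          show ENNReal.ofReal (phi μ n z) ≤ 1 + G ‖z‖
          rw [hphiG z]
          calc ENNReal.ofReal (1 + (G ‖z‖).toReal)
              ≤ ENNReal.ofReal 1 + ENNReal.ofReal (G ‖z‖).toReal := ENNReal.ofReal_add_le
            _ ≤ 1 + G ‖z‖ := by
                rw [ENNReal.ofReal_one]
                exact add_le_add le_rfl ENNReal.ofReal_toReal_le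
      _ = μ Q + ∫⁻ z in Q, G ‖z‖ ∂μ := by
          rw [lintegral_add_left measurable_const]
          congr 1
          simp
      _ < ⊤ := ENNReal.add_lt_top.mpr ⟨measure_lt_top μ Q, lt_top_iff_ne_top.mpr hJ⟩
  -- a.e. lower bound
  have hae : ∀ᵐ z ∂(μ.restrict Q), 1 + T ≤ phi μ n z := by
    have h0ae : ∀ᵐ z ∂μ, z ≠ (0 : Fin m → ℝ) := by
      rw [ae_iff]
      have : {z : Fin m → ℝ | ¬z ≠ 0} = {0} := by ext z; simp
      rw [this]
      exact h0
    filter_upwards [ae_restrict_mem hQmeas, ae_restrict_of_ae h0ae] with z hzQ hz0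
    rw [hphiG z]
    have hzn : ‖z‖ ≤ ℓ / 2 := by
      rw [hQ_def, cube, mem_closedBall_zero_iff] at hzQ
      exact hzQ
    have hTG : Tinf ≤ G ‖z‖ := hGanti hzn
    have := (ENNReal.toReal_le_toReal hTtop (hGfin z hz0)).mpr hTG
    rw [hTr_def]
    linarith
  -- average bound
  have havg : 1 + T ≤ (∫ z in Q, phi μ n z ∂μ) / (μ Q).toReal := by
    have hle : ∫ _ in Q, (1 + T) ∂μ ≤ ∫ z in Q, phi μ n z ∂μ :=
      integral_mono_ae (integrable_const _) hint hae
    rw [setIntegral_const, smul_eq_mul, measureReal_def] at hle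
    rw [le_div_iff₀ hd]
    linarith
  -- conclusion
  have habs : 1 + T ≤ |(∫ z in Q, phi μ n z ∂μ) / (μ Q).toReal| :=
    le_trans havg (le_abs_self _)
  have hKc : (1 + Sg * C₀ + Sg)⁻¹ * Kcoef μ n (0 : Fin m → ℝ) ℓ ((2 : ℝ) ^ k * ℓ) ≤ 1 + T := by
    have h2 : Kcoef μ n (0 : Fin m → ℝ) ℓ ((2 : ℝ) ^ k * ℓ) ≤ (1 + Sg * C₀ + Sg) * (1 + T) :=
      le_trans hK (by nlinarith [mul_nonneg hSg hTnn, mul_nonneg (mul_nonneg hSg hC₀.le) hTnn])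
    calc (1 + Sg * C₀ + Sg)⁻¹ * Kcoef μ n (0 : Fin m → ℝ) ℓ ((2 : ℝ) ^ k * ℓ)
        ≤ (1 + Sg * C₀ + Sg)⁻¹ * ((1 + Sg * C₀ + Sg) * (1 + T)) := by
          apply mul_le_mul_of_nonneg_left h2 (by positivity)
      _ = 1 + T := by
          rw [← mul_assoc, inv_mul_cancel₀ (by positivity), one_mul]
  linarith
end

section
/- Let μ be an n-dimensional measure on ℝ^m and φ(y) = 1 + ∫_{|y| < |t|} |t|^{-n} dμ(t). For cubes Q ⊂ R, setting φ_Q = φ(y_Q) where |y_Q| = |x_Q| + ℓ(Q)/2 (x_Q the center of Q), one has |φ_Q − φ_R| ≤ C·K(Q, R), with C depending only on n, m and the n-dimensionality constant of μ. -/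
open MeasureTheory Metric Set

lemma aux_union_le {α : Type*} [MeasurableSpace α] (μ : Measure α) (f : α → ENNReal)
    (s : Finset ℕ) (t : ℕ → Set α) :
    ∫⁻ x in ⋃ j ∈ s, t j, f x ∂μ ≤ ∑ j ∈ s, ∫⁻ x in t j, f x ∂μ := by
  classical
  induction s using Finset.induction with
  | empty => simp
  | insert _ _ hj ih =>
    rename_i a s'
    rw [Finset.set_biUnion_insert, Finset.sum_insert hj]
    exact le_trans (lintegral_union_le _ _ _) (add_le_add le_rfl ih)

lemma aux_setLIntegral_le {α : Type*} [MeasurableSpace α] (μ : Measure α) {f : α → ENNReal}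
    {s : Set α} (hs : MeasurableSet s) {c : ENNReal} (h : ∀ x ∈ s, f x ≤ c) :
    ∫⁻ x in s, f x ∂μ ≤ c * μ s := by
  calc ∫⁻ x in s, f x ∂μ ≤ ∫⁻ _ in s, c ∂μ := setLIntegral_mono' hs h
    _ = c * μ s := setLIntegral_const s c

lemma aux_ball_subset {E : Type*} [NormedAddCommGroup E] [NormedSpace ℝ E] [Nontrivial E]
    {x y : E} {r R : ℝ} (hr : 0 ≤ r)
    (h : closedBall x r ⊆ closedBall y R) : dist x y + r ≤ R := by
  rcases eq_or_ne x y with rfl | hxy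
  · obtain ⟨u, hu⟩ := exists_norm_eq E hr
    have hx : x + u ∈ closedBall x r := by
      simp [mem_closedBall, dist_eq_norm, hu]
    have := h hx
    simpa [mem_closedBall, dist_eq_norm, hu] using this
  · set d := ‖x - y‖ with hd
    have hd0 : 0 < d := by simpa [hd] using sub_ne_zero.mpr hxy
    set p := x + (r / d) • (x - y) with hp
    have hpx : p ∈ closedBall x r := by
      simp only [hp, mem_closedBall, dist_eq_norm, add_sub_cancel_left, norm_smul]
      rw [Real.norm_eq_abs, abs_of_nonneg (by positivity)]
      rw [div_mul_cancel₀ _ hd0.ne']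
    have hpy := h hpx
    have hkey : p - y = (1 + r / d) • (x - y) := by
      rw [hp]; module
    rw [mem_closedBall, dist_eq_norm, hkey, norm_smul, Real.norm_eq_abs,
      abs_of_nonneg (by positivity)] at hpy
    rw [dist_eq_norm, ← hd]
    have hdd : (1 + r / d) * d = d + r := by field_simp
    rw [← hd, hdd] at hpy
    exact hpy


set_option maxHeartbeats 2000000 in
theorem stmt10 {m : ℕ} (n C₀ : ℝ) (hn : 0 < n) (hnm : n ≤ m)
    (μ : Measure (Fin m → ℝ)) [IsFiniteMeasure μ]
    (hC₀ : 0 < C₀) (hμ : IsNDim μ n C₀) :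
    ∃ C : ℝ, 0 < C ∧ ∀ (xQ xR : Fin m → ℝ) (ℓQ ℓR : ℝ) (yQ yR : Fin m → ℝ),
      0 < ℓQ → 0 < ℓR → cube xQ ℓQ ⊆ cube xR ℓR →
      ‖yQ‖ = ‖xQ‖ + ℓQ / 2 → ‖yR‖ = ‖xR‖ + ℓR / 2 →
      |phi μ n yQ - phi μ n yR| ≤ C * Kcoef μ n xQ ℓQ ℓR := by
  have h8 : (0:ℝ) < (8:ℝ) ^ n := Real.rpow_pos_of_pos (by norm_num) n
  have h4 : (0:ℝ) < (4:ℝ) ^ n := Real.rpow_pos_of_pos (by norm_num) n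
  have hCpos : (0:ℝ) < (8:ℝ) ^ n * (1 + 3 * C₀) + (4:ℝ) ^ n * C₀ := by positivity
  refine ⟨(8:ℝ) ^ n * (1 + 3 * C₀) + (4:ℝ) ^ n * C₀, hCpos, ?_⟩
  set C := (8:ℝ) ^ n * (1 + 3 * C₀) + (4:ℝ) ^ n * C₀ with hCdef
  intro xQ xR ℓQ ℓR yQ yR hℓQ hℓR hQR hyQ hyR
  -- nontriviality
  have hm : 1 ≤ m := by
    by_contra hm
    push_neg at hm
    interval_cases m
    · simp at hnm; linarith
  haveI : Nontrivial (Fin m → ℝ) :=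
    ⟨⟨0, 1, fun h => zero_ne_one (congrFun h ⟨0, hm⟩)⟩⟩
  -- geometry
  have hdist : dist xQ xR + ℓQ / 2 ≤ ℓR / 2 := aux_ball_subset (by positivity) hQR
  have hdist0 : (0:ℝ) ≤ dist xQ xR := dist_nonneg
  have hℓQR : ℓQ ≤ ℓR := by linarith
  set r1 := ‖xQ‖ + ℓQ / 2 with hr1def
  set r2 := ‖xR‖ + ℓR / 2 with hr2def
  have hr1pos : 0 < r1 := by have := norm_nonneg xQ; simp only [hr1def]; linarith
  have hnormQR : ‖xQ‖ ≤ ‖xR‖ + dist xQ xR := by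
    rw [dist_eq_norm]
    have := norm_sub_norm_le xQ xR
    linarith [abs_le.mp (le_refl |‖xQ‖ - ‖xR‖|)]
  have hnormRQ : ‖xR‖ ≤ ‖xQ‖ + dist xQ xR := by
    rw [dist_comm, dist_eq_norm]
    have := norm_sub_norm_le xR xQ
    linarith
  have hr12 : r1 ≤ r2 := by simp only [hr1def, hr2def]; linarith
  have hr2pos : 0 < r2 := lt_of_lt_of_le hr1pos hr12
  have hr2xQ : r2 ≤ ‖xQ‖ + ℓR := by simp only [hr2def]; linarith
  -- sets
  set f : (Fin m → ℝ) → ENNReal := fun t => ENNReal.ofReal (‖t‖ ^ (-n)) with hfdef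
  set S1 : Set (Fin m → ℝ) := {t | r1 < ‖t‖} with hS1def
  set S2 : Set (Fin m → ℝ) := {t | r2 < ‖t‖} with hS2def
  set A : Set (Fin m → ℝ) := {t | r1 < ‖t‖ ∧ ‖t‖ ≤ r2} with hAdef
  have hmeasnorm : Measurable fun t : Fin m → ℝ => ‖t‖ := continuous_norm.measurable
  have hS1m : MeasurableSet S1 := measurableSet_lt measurable_const hmeasnorm
  have hS2m : MeasurableSet S2 := measurableSet_lt measurable_const hmeasnorm
  have hAm : MeasurableSet A :=
    (measurableSet_lt measurable_const hmeasnorm).inter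
      (measurableSet_le hmeasnorm measurable_const)
  -- pointwise bound on f
  have hfb : ∀ t : Fin m → ℝ, r1 ≤ ‖t‖ → f t ≤ ENNReal.ofReal (r1 ^ (-n)) := by
    intro t ht
    exact ENNReal.ofReal_le_ofReal
      (Real.rpow_le_rpow_of_nonpos hr1pos ht (neg_nonpos.mpr hn.le))
  have hfin : ∀ (s : Set (Fin m → ℝ)), MeasurableSet s → (∀ t ∈ s, r1 ≤ ‖t‖) →
      ∫⁻ t in s, f t ∂μ ≠ ⊤ := by
    intro s hs h
    have := aux_setLIntegral_le μ hs (fun t ht => hfb t (h t ht))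
    refine ne_top_of_le_ne_top ?_ this
    exact (ENNReal.mul_lt_top ENNReal.ofReal_lt_top (measure_lt_top μ s)).ne
  have hI2fin : ∫⁻ t in S2, f t ∂μ ≠ ⊤ :=
    hfin S2 hS2m (fun t ht => le_trans hr12 (le_of_lt ht))
  have hIAfin : ∫⁻ t in A, f t ∂μ ≠ ⊤ :=
    hfin A hAm (fun t ht => le_of_lt ht.1)
  -- splitting
  have hunion : S1 = S2 ∪ A := by
    ext t
    simp only [hS1def, hS2def, hAdef, mem_setOf_eq, mem_union]
    constructor
    · intro h
      rcases le_or_gt ‖t‖ r2 with h2 | h2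
      · exact Or.inr ⟨h, h2⟩
      · exact Or.inl h2
    · rintro (h | ⟨h, _⟩)
      · exact lt_of_le_of_lt hr12 h
      · exact h
  have hdisj : Disjoint S2 A := by
    rw [Set.disjoint_left]
    rintro t ht ⟨_, h2⟩
    have ht' : r2 < ‖t‖ := ht
    exact absurd h2 (not_le.mpr ht')
  have hIsum : ∫⁻ t in S1, f t ∂μ = (∫⁻ t in S2, f t ∂μ) + ∫⁻ t in A, f t ∂μ := by
    rw [hunion, lintegral_union hAm hdisj]
  -- phi difference
  have e1 : phi μ n yQ = 1 + (∫⁻ t in S1, f t ∂μ).toReal := by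
    unfold phi; rw [hyQ]
  have e2 : phi μ n yR = 1 + (∫⁻ t in S2, f t ∂μ).toReal := by
    unfold phi; rw [hyR]
  have hdiff : phi μ n yQ - phi μ n yR = (∫⁻ t in A, f t ∂μ).toReal := by
    rw [e1, e2, hIsum, ENNReal.toReal_add hI2fin hIAfin]; ring
  rw [hdiff, abs_of_nonneg ENNReal.toReal_nonneg]
  -- K ≥ 1
  have hterm_nonneg : ∀ j : ℕ, (0:ℝ) ≤
      (μ (cube xQ ((2 : ℝ) ^ j * ℓQ))).toReal / (((2 : ℝ) ^ j * ℓQ) ^ n) := by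
    intro j
    apply div_nonneg ENNReal.toReal_nonneg
    exact (Real.rpow_pos_of_pos (by positivity) n).le
  have hK1 : 1 ≤ Kcoef μ n xQ ℓQ ℓR := by
    unfold Kcoef
    have : (0:ℝ) ≤ ∑ j ∈ Finset.Icc 1 (NQR ℓQ ℓR),
        (μ (cube xQ ((2 : ℝ) ^ j * ℓQ))).toReal / (((2 : ℝ) ^ j * ℓQ) ^ n) :=
      Finset.sum_nonneg fun j _ => hterm_nonneg j
    linarith
  have hCK0 : (0:ℝ) ≤ C * Kcoef μ n xQ ℓQ ℓR := by positivity
  apply ENNReal.toReal_le_of_le_ofReal hCK0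
  -- main case split
  rcases le_or_gt ℓR ‖xQ‖ with hcase | hcase
  · -- Case 1 : ℓR ≤ ‖xQ‖
    have hA0 : A ⊆ cube (0 : Fin m → ℝ) (2 * r2) := by
      intro t ht
      have h2 : ‖t‖ ≤ r2 := ht.2
      simp only [cube, mem_closedBall, dist_zero_right]
      have he : (2 * r2) / 2 = r2 := by ring
      rw [he]
      exact h2
    have hμA : μ A ≤ ENNReal.ofReal (C₀ * (2 * r2) ^ n) :=
      le_trans (measure_mono hA0) (hμ 0 (2 * r2) (by positivity))
    have h1 : ∫⁻ t in A, f t ∂μ ≤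
        ENNReal.ofReal (r1 ^ (-n)) * ENNReal.ofReal (C₀ * (2 * r2) ^ n) := by
      refine le_trans (aux_setLIntegral_le μ hAm fun t ht => hfb t (le_of_lt ht.1)) ?_
      exact mul_le_mul' le_rfl hμA
    refine le_trans h1 ?_
    rw [← ENNReal.ofReal_mul (Real.rpow_nonneg hr1pos.le _)]
    apply ENNReal.ofReal_le_ofReal
    have hxQr1 : ‖xQ‖ ≤ r1 := by simp only [hr1def]; linarith
    have h2r : 2 * r2 ≤ 4 * r1 := by linarith
    have hpow : (2 * r2) ^ n ≤ (4 * r1) ^ n :=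
      Real.rpow_le_rpow (by positivity) h2r hn.le
    have h0 : r1 ^ n ≠ 0 := (Real.rpow_pos_of_pos hr1pos n).ne'
    have hid : r1 ^ (-n) * (C₀ * (4 * r1) ^ n) = C₀ * (4:ℝ) ^ n := by
      rw [Real.mul_rpow (by norm_num) hr1pos.le, Real.rpow_neg hr1pos.le]
      field_simp
    have hr1n : (0:ℝ) < r1 ^ (-n) := Real.rpow_pos_of_pos hr1pos _
    calc r1 ^ (-n) * (C₀ * (2 * r2) ^ n) ≤ r1 ^ (-n) * (C₀ * (4 * r1) ^ n) := by
          apply mul_le_mul_of_nonneg_left _ hr1n.le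
          exact mul_le_mul_of_nonneg_left hpow hC₀.le
      _ = C₀ * (4:ℝ) ^ n := hid
      _ ≤ C * Kcoef μ n xQ ℓQ ℓR := by
          nlinarith [mul_le_mul_of_nonneg_left hK1 hCpos.le,
            mul_pos h8 (by linarith : (0:ℝ) < 1 + 3 * C₀)]
  · -- Case 2 : ‖xQ‖ < ℓR
    set N := NQR ℓQ ℓR with hNdef
    set J := N + 3 with hJdef
    have h2N : ℓR ≤ 2 ^ N * ℓQ := by
      have hrat : (0:ℝ) < ℓR / ℓQ := by positivity
      have h1 : Real.logb 2 (ℓR / ℓQ) ≤ (N : ℝ) := Nat.le_ceil _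
      have h2 : (2:ℝ) ^ (Real.logb 2 (ℓR / ℓQ)) ≤ (2:ℝ) ^ (N:ℝ) :=
        Real.rpow_le_rpow_of_exponent_le one_le_two h1
      rw [Real.rpow_logb two_pos (by norm_num) hrat, Real.rpow_natCast] at h2
      rw [div_le_iff₀ hℓQ] at h2
      linarith
    set T : ℕ → Set (Fin m → ℝ) := fun j =>
      A ∩ {t | (2:ℝ) ^ j * (ℓQ / 4) < ‖t - xQ‖ ∧ ‖t - xQ‖ ≤ (2:ℝ) ^ j * (ℓQ / 2)} with hTdef
    have hTm : ∀ j, MeasurableSet (T j) := by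
      intro j
      apply hAm.inter
      have hm2 : Measurable fun t : Fin m → ℝ => ‖t - xQ‖ :=
        (continuous_norm.comp (continuous_id.sub continuous_const)).measurable
      exact (measurableSet_lt measurable_const hm2).inter
        (measurableSet_le hm2 measurable_const)
    have hcover : A ⊆ ⋃ j ∈ Finset.Icc 1 J, T j := by
      intro t ht
      obtain ⟨ht1, ht2⟩ := ht
      have hns : ‖t‖ - ‖xQ‖ ≤ ‖t - xQ‖ := norm_sub_norm_le t xQ
      have hd1 : ℓQ / 2 < ‖t - xQ‖ := by
        simp only [hr1def] at ht1
        linarith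
      have hdJ : ‖t - xQ‖ ≤ (2:ℝ) ^ J * (ℓQ / 2) := by
        have hub : ‖t - xQ‖ ≤ ‖t‖ + ‖xQ‖ := norm_sub_le t xQ
        have h2J : (2:ℝ) ^ J = 8 * 2 ^ N := by rw [hJdef, pow_add]; ring
        have h3 : ‖t - xQ‖ ≤ 3 * ℓR := by linarith
        rw [h2J]
        have hP : (0:ℝ) < 2 ^ N * ℓQ := mul_pos (pow_pos (two_pos : (0:ℝ) < 2) N) hℓQ
        linarith
      have hex : ∃ k, ‖t - xQ‖ ≤ (2:ℝ) ^ k * (ℓQ / 2) := ⟨J, hdJ⟩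
      classical
      set j := Nat.find hex with hjdef
      have hPj : ‖t - xQ‖ ≤ (2:ℝ) ^ j * (ℓQ / 2) := Nat.find_spec hex
      have hj0 : j ≠ 0 := by
        intro h
        rw [h, pow_zero, one_mul] at hPj
        linarith
      have hjJ : j ≤ J := Nat.find_min' hex hdJ
      have hPj1 : ¬ ‖t - xQ‖ ≤ (2:ℝ) ^ (j - 1) * (ℓQ / 2) := Nat.find_min hex (by omega)
      have h2j : (2:ℝ) ^ j = 2 * 2 ^ (j - 1) := by
        rw [← pow_succ']
        congr 1
        omega
      have hlow : (2:ℝ) ^ j * (ℓQ / 4) < ‖t - xQ‖ := by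
        push_neg at hPj1
        rw [h2j]
        linarith
      refine Set.mem_biUnion (Finset.mem_Icc.mpr ⟨by omega, hjJ⟩) ?_
      exact ⟨⟨ht1, ht2⟩, hlow, hPj⟩
    have hterm : ∀ j ∈ Finset.Icc 1 J, ∫⁻ t in T j, f t ∂μ ≤
        ENNReal.ofReal ((8:ℝ) ^ n * ((2:ℝ) ^ j * ℓQ) ^ (-n)) *
          μ (cube xQ ((2:ℝ) ^ j * ℓQ)) := by
      intro j _
      have hx : (0:ℝ) < (2:ℝ) ^ j * ℓQ := by positivity
      have hpt : ∀ t ∈ T j, f t ≤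
          ENNReal.ofReal ((8:ℝ) ^ n * ((2:ℝ) ^ j * ℓQ) ^ (-n)) := by
        intro t ht
        obtain ⟨⟨ht1, _⟩, htl, _⟩ := ht
        have hxQn : ‖xQ‖ < ‖t‖ := by
          have ht1' : r1 < ‖t‖ := ht1
          simp only [hr1def] at ht1'
          linarith
        have hub : ‖t - xQ‖ ≤ ‖t‖ + ‖xQ‖ := norm_sub_le t xQ
        have htn : ((2:ℝ) ^ j * ℓQ) / 8 < ‖t‖ := by
          have htl' : (2:ℝ) ^ j * (ℓQ / 4) < ‖t - xQ‖ := htl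
          linarith
        have hb : ‖t‖ ^ (-n) ≤ (((2:ℝ) ^ j * ℓQ) / 8) ^ (-n) :=
          Real.rpow_le_rpow_of_nonpos (by positivity) htn.le (neg_nonpos.mpr hn.le)
        have hid : (((2:ℝ) ^ j * ℓQ) / 8) ^ (-n) =
            (8:ℝ) ^ n * ((2:ℝ) ^ j * ℓQ) ^ (-n) := by
          rw [Real.div_rpow hx.le (by norm_num : (0:ℝ) ≤ 8),
            Real.rpow_neg (by norm_num : (0:ℝ) ≤ 8), div_eq_mul_inv, inv_inv]
          ring
        exact ENNReal.ofReal_le_ofReal (by rw [← hid]; exact hb)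
      refine le_trans (aux_setLIntegral_le μ (hTm j) hpt) ?_
      refine mul_le_mul' le_rfl (measure_mono ?_)
      intro t ht
      obtain ⟨_, _, hth⟩ := ht
      simp only [cube, mem_closedBall, dist_eq_norm]
      have hth' : ‖t - xQ‖ ≤ (2:ℝ) ^ j * (ℓQ / 2) := hth
      linarith
    have hsum1 : ∫⁻ t in A, f t ∂μ ≤
        ∑ j ∈ Finset.Icc 1 J, ENNReal.ofReal ((8:ℝ) ^ n * ((2:ℝ) ^ j * ℓQ) ^ (-n)) *
          μ (cube xQ ((2:ℝ) ^ j * ℓQ)) :=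
      le_trans (lintegral_mono_set hcover)
        (le_trans (aux_union_le μ f _ T) (Finset.sum_le_sum hterm))
    set g : ℕ → ℝ := fun j =>
      (μ (cube xQ ((2:ℝ) ^ j * ℓQ))).toReal / (((2:ℝ) ^ j * ℓQ) ^ n) with hgdef
    have hg0 : ∀ j : ℕ, (0:ℝ) ≤ g j := fun j => hterm_nonneg j
    have hterm1 : ∀ j : ℕ, ENNReal.ofReal ((8:ℝ) ^ n * ((2:ℝ) ^ j * ℓQ) ^ (-n)) *
        μ (cube xQ ((2:ℝ) ^ j * ℓQ)) = ENNReal.ofReal ((8:ℝ) ^ n * g j) := by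
      intro j
      have hx : (0:ℝ) < (2:ℝ) ^ j * ℓQ := by positivity
      have hxn : (0:ℝ) < ((2:ℝ) ^ j * ℓQ) ^ n := Real.rpow_pos_of_pos hx n
      rw [← ENNReal.ofReal_toReal (measure_ne_top μ (cube xQ ((2:ℝ) ^ j * ℓQ))),
        ← ENNReal.ofReal_mul (by positivity)]
      congr 1
      rw [hgdef, Real.rpow_neg hx.le]
      show (8:ℝ) ^ n * (((2:ℝ) ^ j * ℓQ) ^ n)⁻¹ * (μ (cube xQ ((2:ℝ) ^ j * ℓQ))).toReal =
        (8:ℝ) ^ n * ((μ (cube xQ ((2:ℝ) ^ j * ℓQ))).toReal / ((2:ℝ) ^ j * ℓQ) ^ n)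
      rw [div_eq_mul_inv]
      ring
    have hterm2 : ∀ j : ℕ, ENNReal.ofReal ((8:ℝ) ^ n * ((2:ℝ) ^ j * ℓQ) ^ (-n)) *
        μ (cube xQ ((2:ℝ) ^ j * ℓQ)) ≤ ENNReal.ofReal ((8:ℝ) ^ n * C₀) := by
      intro j
      have hx : (0:ℝ) < (2:ℝ) ^ j * ℓQ := by positivity
      have hxn : (0:ℝ) < ((2:ℝ) ^ j * ℓQ) ^ n := Real.rpow_pos_of_pos hx n
      calc ENNReal.ofReal ((8:ℝ) ^ n * ((2:ℝ) ^ j * ℓQ) ^ (-n)) *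
            μ (cube xQ ((2:ℝ) ^ j * ℓQ))
          ≤ ENNReal.ofReal ((8:ℝ) ^ n * ((2:ℝ) ^ j * ℓQ) ^ (-n)) *
            ENNReal.ofReal (C₀ * ((2:ℝ) ^ j * ℓQ) ^ n) := mul_le_mul' le_rfl (hμ xQ _ hx)
        _ = ENNReal.ofReal ((8:ℝ) ^ n * ((2:ℝ) ^ j * ℓQ) ^ (-n) *
            (C₀ * ((2:ℝ) ^ j * ℓQ) ^ n)) := (ENNReal.ofReal_mul (by positivity)).symm
        _ = ENNReal.ofReal ((8:ℝ) ^ n * C₀) := by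
            congr 1
            rw [Real.rpow_neg hx.le]
            have hinv : (((2:ℝ) ^ j * ℓQ) ^ n)⁻¹ * ((2:ℝ) ^ j * ℓQ) ^ n = 1 :=
              inv_mul_cancel₀ hxn.ne'
            linear_combination (8:ℝ) ^ n * C₀ * hinv
    have hIoc : ∀ k : ℕ, Finset.Icc 1 k = Finset.Ioc 0 k := fun k => Finset.Icc_add_one_left_eq_Ioc 0 k
    have hsum2 : ∑ j ∈ Finset.Icc 1 J, ENNReal.ofReal ((8:ℝ) ^ n * ((2:ℝ) ^ j * ℓQ) ^ (-n)) *
        μ (cube xQ ((2:ℝ) ^ j * ℓQ)) ≤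
        ENNReal.ofReal ((8:ℝ) ^ n * ∑ j ∈ Finset.Icc 1 N, g j) +
          ENNReal.ofReal (3 * ((8:ℝ) ^ n * C₀)) := by
      rw [hIoc J, ← Finset.sum_Ioc_consecutive _ (Nat.zero_le N) (by omega : N ≤ J)]
      apply add_le_add
      · apply le_of_eq
        calc ∑ j ∈ Finset.Ioc 0 N, ENNReal.ofReal ((8:ℝ) ^ n * ((2:ℝ) ^ j * ℓQ) ^ (-n)) *
              μ (cube xQ ((2:ℝ) ^ j * ℓQ))
            = ∑ j ∈ Finset.Ioc 0 N, ENNReal.ofReal ((8:ℝ) ^ n * g j) :=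
              Finset.sum_congr rfl fun j _ => hterm1 j
          _ = ENNReal.ofReal (∑ j ∈ Finset.Ioc 0 N, (8:ℝ) ^ n * g j) :=
              (ENNReal.ofReal_sum_of_nonneg fun j _ => mul_nonneg h8.le (hg0 j)).symm
          _ = ENNReal.ofReal ((8:ℝ) ^ n * ∑ j ∈ Finset.Icc 1 N, g j) := by
              rw [hIoc N, Finset.mul_sum]
      · calc ∑ j ∈ Finset.Ioc N J, ENNReal.ofReal ((8:ℝ) ^ n * ((2:ℝ) ^ j * ℓQ) ^ (-n)) *
              μ (cube xQ ((2:ℝ) ^ j * ℓQ))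
            ≤ ∑ _j ∈ Finset.Ioc N J, ENNReal.ofReal ((8:ℝ) ^ n * C₀) :=
              Finset.sum_le_sum fun j _ => hterm2 j
          _ = ENNReal.ofReal (3 * ((8:ℝ) ^ n * C₀)) := by
              rw [Finset.sum_const, Nat.card_Ioc]
              have h3 : J - N = 3 := by omega
              rw [h3, ENNReal.ofReal_mul (by norm_num : (0:ℝ) ≤ 3)]
              rw [nsmul_eq_mul]
              norm_num
    refine le_trans hsum1 (le_trans hsum2 ?_)
    rw [← ENNReal.ofReal_add
      (mul_nonneg h8.le (Finset.sum_nonneg fun j _ => hg0 j)) (by positivity)]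
    apply ENNReal.ofReal_le_ofReal
    have hgS : (0:ℝ) ≤ ∑ j ∈ Finset.Icc 1 N, g j :=
      Finset.sum_nonneg fun j _ => hg0 j
    have hKeq : Kcoef μ n xQ ℓQ ℓR = 1 + ∑ j ∈ Finset.Icc 1 N, g j := rfl
    rw [hKeq]
    have hC8 : (8:ℝ) ^ n ≤ C := by nlinarith [mul_pos h8 hC₀, mul_pos h4 hC₀]
    have hC38 : 3 * ((8:ℝ) ^ n * C₀) ≤ C := by nlinarith [mul_pos h4 hC₀]
    nlinarith [mul_nonneg (sub_nonneg.mpr hC8) hgS]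
end
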